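/- Consider a uniform instance, and suppose S ⊆ Fin n is a k-colorable subfamily with W ≥ k·Max. Then there exists a feasible contiguous coloring c such that c i is a block of exactly Max consecutive colors for every i ∈ S, and c i = ∅ for every i ∉ S. -/
import Mathlib


open Finset

/-- Distinct jobs `i, j` overlap if their half-open intervals intersect. -/
def Overlap {n : ℕ} (s e : Fin n → ℝ) (i j : Fin n) : Prop :=
  i ≠ j ∧ (Set.Ico (s i) (e i) ∩ Set.Ico (s j) (e j)).Nonempty

/-- A feasible contiguous coloring (FSAP solution). -/
def IsContigColoring {n : ℕ} (W : ℕ) (s e : Fin n → ℝ) (rmax : Fin n → ℕ)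
    (c : Fin n → Finset (Fin W)) : Prop :=
  (∀ i, c i = ∅ ∨ ∃ a b : Fin W, a ≤ b ∧ c i = Finset.Icc a b) ∧
  (∀ i, (c i).card ≤ rmax i) ∧
  (∀ i j, Overlap s e i j → c i ∩ c j = ∅)

/-- A subfamily `S` is `k`-colorable if every point is covered at most `k` times. -/
def KColorable {n : ℕ} (s e : Fin n → ℝ) (k : ℕ) (S : Finset (Fin n)) : Prop :=
  ∀ t : ℝ, (S.filter (fun i => s i ≤ t ∧ t < e i)).card ≤ k

lemma overlap_symm {n : ℕ} {s e : Fin n → ℝ} {i j : Fin n} (h : Overlap s e i j) :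
    Overlap s e j i := ⟨h.1.symm, by rw [Set.inter_comm]; exact h.2⟩

lemma blocks_disjoint (M : ℕ) (hM : 1 ≤ M) {q q' x : ℕ} (h : q ≠ q')
    (h1 : q * M ≤ x) (h2 : x ≤ q * M + (M - 1))
    (h1' : q' * M ≤ x) (h2' : x ≤ q' * M + (M - 1)) : False := by
  rcases h.lt_or_gt with hlt | hlt
  · have := Nat.mul_le_mul_right M (Nat.succ_le_of_lt hlt)
    rw [Nat.succ_mul] at this
    omega
  · have := Nat.mul_le_mul_right M (Nat.succ_le_of_lt hlt)
    rw [Nat.succ_mul] at this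
    omega

lemma exists_proper_coloring {n : ℕ} (s e : Fin n → ℝ) (hse : ∀ i, s i < e i)
    (k : ℕ) : ∀ S : Finset (Fin n), KColorable s e k S →
    ∃ col : Fin n → ℕ, (∀ i ∈ S, col i < k) ∧
      ∀ i ∈ S, ∀ j ∈ S, Overlap s e i j → col i ≠ col j := by
  intro S
  induction S using Finset.strongInduction with
  | _ S IH =>
    intro hS
    classical
    rcases S.eq_empty_or_nonempty with rfl | hne
    · exact ⟨fun _ => 0, by simp, by simp⟩
    obtain ⟨i, hiS, hmax⟩ := S.exists_max_image s hne
    obtain ⟨col, hlt, hprop⟩ := IH (S.erase i) (Finset.erase_ssubset hiS)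
      (fun t => le_trans (Finset.card_le_card
        (Finset.filter_subset_filter _ (Finset.erase_subset _ _))) (hS t))
    have hk1 : 1 ≤ k := by
      have := hS (s i)
      have hmem : i ∈ S.filter (fun j => s j ≤ s i ∧ s i < e j) :=
        Finset.mem_filter.mpr ⟨hiS, le_refl _, hse i⟩
      have := Finset.card_pos.mpr ⟨i, hmem⟩
      omega
    set T := (S.erase i).filter (fun j => Overlap s e i j) with hT
    have hTsub : T ⊆ (S.filter (fun j => s j ≤ s i ∧ s i < e j)).erase i := by
      intro j hj
      rw [hT, Finset.mem_filter] at hj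
      obtain ⟨hjE, hne', ⟨t, ⟨⟨ht1, ht2⟩, ⟨ht3, ht4⟩⟩⟩⟩ := hj
      have hjS : j ∈ S := Finset.mem_of_mem_erase hjE
      refine Finset.mem_erase.mpr ⟨Finset.ne_of_mem_erase hjE, Finset.mem_filter.mpr
        ⟨hjS, hmax j hjS, lt_of_le_of_lt ht1 ht4⟩⟩
    have hTcard : T.card ≤ k - 1 := by
      have h1 := Finset.card_le_card hTsub
      have hmem : i ∈ S.filter (fun j => s j ≤ s i ∧ s i < e j) :=
        Finset.mem_filter.mpr ⟨hiS, le_refl _, hse i⟩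
      rw [Finset.card_erase_of_mem hmem] at h1
      have := hS (s i)
      omega
    -- find a free color
    have hfree : ∃ q, q < k ∧ q ∉ T.image col := by
      by_contra hcon
      push_neg at hcon
      have hsub : Finset.range k ⊆ T.image col := fun q hq =>
        hcon q (Finset.mem_range.mp hq)
      have := Finset.card_le_card hsub
      have h2 := Finset.card_image_le (s := T) (f := col)
      rw [Finset.card_range] at this
      omega
    obtain ⟨q, hqk, hqfree⟩ := hfree
    refine ⟨Function.update col i q, ?_, ?_⟩
    · intro j hj
      by_cases hji : j = i
      · subst hji; simp [Function.update_self, hqk]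
      · rw [Function.update_of_ne hji]
        exact hlt j (Finset.mem_erase.mpr ⟨hji, hj⟩)
    · intro a ha b hb hov
      have hconn : ∀ j ∈ S, j ≠ i → Overlap s e i j → col j ≠ q := by
        intro j hjS hji hovj hcolj
        exact hqfree (Finset.mem_image.mpr ⟨j, Finset.mem_filter.mpr
          ⟨Finset.mem_erase.mpr ⟨hji, hjS⟩, hovj⟩, hcolj⟩)
      by_cases hai : a = i
      · have hbi : b ≠ i := fun h => hov.1 ((hai.trans h.symm))
        rw [hai, Function.update_self, Function.update_of_ne hbi]
        exact fun h => hconn b hb hbi (hai ▸ hov) h.symm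
      · by_cases hbi : b = i
        · rw [hbi, Function.update_of_ne hai, Function.update_self]
          exact hconn a ha hai (overlap_symm (hbi ▸ hov))
        · rw [Function.update_of_ne hai, Function.update_of_ne hbi]
          exact hprop a (Finset.mem_erase.mpr ⟨hai, ha⟩) b
            (Finset.mem_erase.mpr ⟨hbi, hb⟩) hov

theorem stmt_3 {n : ℕ} (s e : Fin n → ℝ) (hse : ∀ i, s i < e i)
    (W : ℕ) (hW : 1 ≤ W) (rmax : Fin n → ℕ) (hrmax : ∀ i, rmax i ≤ W)
    (p : Fin n → ℝ) (hp : ∀ i, 1 ≤ p i)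
    (Max : ℕ) (hMax1 : 1 ≤ Max) (hMaxW : Max ≤ W)
    (hup : ∀ i, p i = 1) (hur : ∀ i, rmax i = Max)
    (k : ℕ) (S : Finset (Fin n)) (hS : KColorable s e k S) (hkW : k * Max ≤ W) :
    ∃ c : Fin n → Finset (Fin W), IsContigColoring W s e rmax c ∧
      (∀ i ∈ S, ∃ a b : Fin W, a ≤ b ∧ c i = Finset.Icc a b ∧ (c i).card = Max) ∧
      (∀ i ∉ S, c i = ∅) := by
  obtain ⟨col, hcol, hprop⟩ := exists_proper_coloring s e hse k S hS
  set q : Fin n → ℕ := fun i => min (col i) (k - 1) with hq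
  have hbound : ∀ i, q i * Max + Max ≤ W := by
    intro i
    rcases Nat.eq_zero_or_pos k with hk0 | hk0
    · simp [hq, hk0]
      omega
    · have h1 : q i ≤ k - 1 := min_le_right _ _
      have h2 : (q i + 1) * Max ≤ k * Max :=
        Nat.mul_le_mul_right Max (by omega)
      rw [Nat.add_mul, one_mul] at h2
      omega
  have ha : ∀ i, q i * Max < W := fun i => by have := hbound i; omega
  have hb : ∀ i, q i * Max + (Max - 1) < W := fun i => by have := hbound i; omega
  set c : Fin n → Finset (Fin W) := fun i =>
    if i ∈ S then Finset.Icc ⟨q i * Max, ha i⟩ ⟨q i * Max + (Max - 1), hb i⟩ else ∅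
    with hc
  have hqcol : ∀ i ∈ S, q i = col i := by
    intro i hi
    have := hcol i hi
    simp only [hq]
    omega
  have hab : ∀ i, (⟨q i * Max, ha i⟩ : Fin W) ≤ ⟨q i * Max + (Max - 1), hb i⟩ := by
    intro i; exact Fin.mk_le_mk.mpr (Nat.le_add_right _ _)
  have hcard : ∀ i ∈ S, (c i).card = Max := by
    intro i hi
    simp only [hc, if_pos hi]
    rw [Fin.card_Icc]
    simp
    omega
  refine ⟨c, ⟨?_, ?_, ?_⟩, ?_, ?_⟩
  · intro i
    by_cases hi : i ∈ S
    · right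
      exact ⟨_, _, hab i, by simp only [hc, if_pos hi]⟩
    · left; simp only [hc, if_neg hi]
  · intro i
    rw [hur i]
    by_cases hi : i ∈ S
    · rw [hcard i hi]
    · simp [hc, if_neg hi]
  · intro i j hov
    by_cases hi : i ∈ S
    · by_cases hj : j ∈ S
      · have hne : col i ≠ col j := hprop i hi j hj hov
        simp only [hc, if_pos hi, if_pos hj]
        rw [Finset.eq_empty_iff_forall_notMem]
        intro x hx
        rw [Finset.mem_inter, Finset.mem_Icc, Finset.mem_Icc] at hx
        obtain ⟨⟨h1, h2⟩, h3, h4⟩ := hx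
        rw [Fin.le_def] at h1 h2 h3 h4
        simp only at h1 h2 h3 h4
        have hqne : q i ≠ q j := by rw [hqcol i hi, hqcol j hj]; exact hne
        exact blocks_disjoint Max hMax1 hqne h1 h2 h3 h4
      · simp [hc, if_neg hj]
    · simp [hc, if_neg hi]
  · intro i hi
    exact ⟨_, _, hab i, by simp only [hc, if_pos hi], hcard i hi⟩
  · intro i hi
    simp [hc, if_neg hi]
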